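/- For any tree T, the tree polynomial of T is τ_T(x) = x. -/

import Mathlib

open Polynomial

noncomputable section
open scoped Classical

/-- The weighted chromatic symmetric function of a (vertex-weighted) finite simple graph,
as a formal power series in the variables `x_0, x_1, x_2, …`: the coefficient of a monomial
`d` is the number of proper colourings `κ : V → ℕ` such that for each colour `i`, the total
weight of vertices coloured `i` is `d i`. -/
def wcsf {V : Type} [Fintype V] (G : SimpleGraph V) (ω : V → ℕ) : MvPowerSeries ℕ ℚ :=
  fun d => (Nat.card {κ : V → ℕ // (∀ u v, G.Adj u v → κ u ≠ κ v) ∧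
    ∀ i : ℕ, ∑ v ∈ Finset.univ.filter (fun v => κ v = i), ω v = d i} : ℚ)

/-- The (unweighted) chromatic symmetric function. -/
def csf {V : Type} [Fintype V] (G : SimpleGraph V) : MvPowerSeries ℕ ℚ :=
  wcsf G (fun _ => 1)

/-- `XP μ` is the chromatic symmetric function of the disjoint union of paths whose sizes are
given by the multiset `μ` (the chromatic symmetric function is multiplicative over disjoint
unions). -/
def XP (μ : Multiset ℕ) : MvPowerSeries ℕ ℚ :=
  (μ.map (fun m => csf (SimpleGraph.pathGraph m))).prod

/-- The power-sum symmetric function `p_n = Σ_i x_i^n`. -/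
def psum (n : ℕ) : MvPowerSeries ℕ ℚ :=
  fun d => if ∃ i, d = Finsupp.single i n then 1 else 0

/-- The power-sum symmetric function `p_μ`. -/
def pp (μ : Multiset ℕ) : MvPowerSeries ℕ ℚ := (μ.map psum).prod

/-- `P` is the chromatic polynomial of `G`: `P(k)` counts proper `k`-colourings for all
positive integers `k`. -/
def IsChromaticPoly {V : Type} [Fintype V] (G : SimpleGraph V) (P : Polynomial ℚ) : Prop :=
  ∀ k : ℕ, 0 < k → P.eval (k : ℚ) =
    Nat.card {c : V → Fin k // ∀ u v, G.Adj u v → c u ≠ c v}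

/-- The polynomial `Σ_λ a_λ x^{ℓ(λ)}` built from coefficients `a` indexed by partitions of
`n`; when `a` gives the path-basis coefficients of `X_G` this is the tree polynomial `τ_G`,
and when `a` gives the power-sum coefficients it is the chromatic polynomial. -/
def basisPoly (n : ℕ) (a : n.Partition → ℚ) : Polynomial ℚ :=
  ∑ l : n.Partition, Polynomial.C (a l) * Polynomial.X ^ l.parts.card

/-!
Specialise the degree-`n` part of a symmetric function at `x_0 = ⋯ = x_k = 1` and all other
variables `0`. The chromatic symmetric function of a graph becomes its number of proper
`(k+1)`-colourings, which for a tree on `m` vertices is `(k+1) k^(m-1) = t k^m` with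
`t = 1 + 1/k` (remove a leaf and induct). Hence `X_T ↦ t k^n` and, the specialisation being
multiplicative on homogeneous series, `X_{P_λ} ↦ t^ℓ(λ) k^n`. The expansion of `X_T` thus gives
`τ_T(t) = t` for infinitely many `t`, so `τ_T = x`.
-/

namespace SimpleGraph

variable {V α : Type*}

lemma card_coloring_eq_card_coloring_induce_mul [Finite V] [Finite α] {G : SimpleGraph V}
    {v : V} (hv : ∃! u, G.Adj v u) :
    Nat.card (G.Coloring α) = Nat.card ((G.induce {v}ᶜ).Coloring α) * (Nat.card α - 1) := by
  obtain ⟨u, hvu, hleaf⟩ := hv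
  have := Fintype.ofFinite V
  have := Fintype.ofFinite α
  have huv : u ∈ ({v}ᶜ : Set V) := G.ne_of_adj hvu.symm
  let restrict (C : G.Coloring α) : (G.induce {v}ᶜ).Coloring α :=
    C.comp (Embedding.induce {v}ᶜ).toHom
  let extend (c : (G.induce {v}ᶜ).Coloring α) (x : {x // x ≠ c ⟨u, huv⟩}) : G.Coloring α :=
    ⟨fun w => if h : w = v then x else c ⟨w, h⟩, fun {w w'} hww' => by
      by_cases hw : w = v
      · subst hw
        obtain rfl := hleaf w' hww'
        simpa [G.ne_of_adj hvu.symm] using x.2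
      by_cases hw' : w' = v
      · subst hw'
        obtain rfl := hleaf w hww'.symm
        simpa [hw] using x.2.symm
      simpa [hw, hw'] using c.valid (show (G.induce {v}ᶜ).Adj ⟨w, hw⟩ ⟨w', hw'⟩ from hww')⟩
  let e : G.Coloring α ≃ Σ c : (G.induce {v}ᶜ).Coloring α, {x // x ≠ c ⟨u, huv⟩} :=
    { toFun := fun C => ⟨restrict C, C v, C.valid hvu⟩
      invFun := fun p => extend p.1 p.2
      left_inv := fun C => by
        ext w
        by_cases hw : w = v
        · subst hw; simp [extend]
        · simp [extend, restrict, hw]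
      right_inv := fun ⟨c, x⟩ => by
        refine Sigma.subtype_ext ?_ (by simp [extend])
        ext ⟨w, hw⟩
        simp [extend, restrict, show w ≠ v from hw] }
  rw [Nat.card_congr e, Nat.card_sigma]
  simp_rw [Nat.card_eq_fintype_card, Fintype.card_subtype_compl, Fintype.card_subtype_eq]
  rw [Finset.sum_const, Finset.card_univ, smul_eq_mul]

lemma card_coloring_of_subsingleton [Finite V] [Subsingleton V] (G : SimpleGraph V) :
    Nat.card (G.Coloring α) = Nat.card α ^ Nat.card V := by
  rw [← Nat.card_fun]
  exact Nat.card_congr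
    { toFun := fun C => C
      invFun := fun f => ⟨f, fun h => absurd (Subsingleton.elim _ _) (G.ne_of_adj h)⟩
      left_inv := fun _ => rfl
      right_inv := fun _ => rfl }

theorem IsTree.card_coloring [Finite V] [Finite α] {T : SimpleGraph V} (hT : T.IsTree) :
    Nat.card (T.Coloring α) = Nat.card α * (Nat.card α - 1) ^ (Nat.card V - 1) := by
  obtain ⟨n, hn⟩ := Nat.exists_eq_add_one.2 (Nat.card_pos_iff.2 ⟨hT.connected.nonempty, ‹_›⟩)
  induction n generalizing V with
  | zero =>
    have : Subsingleton V := (Finite.card_le_one_iff_subsingleton).1 hn.le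
    rw [card_coloring_of_subsingleton, hn]
    simp
  | succ n ih =>
    have := Fintype.ofFinite V
    have : Nontrivial V := Finite.one_lt_card_iff_nontrivial.1 (by omega)
    obtain ⟨v, hv⟩ := hT.exists_vert_degree_one_of_nontrivial
    have hT' : (T.induce {v}ᶜ).IsTree :=
      ⟨hT.connected.induce_compl_singleton_of_degree_eq_one hv, hT.isAcyclic.induce _⟩
    have hcard : Nat.card ({v}ᶜ : Set V) = n + 1 := by
      rw [Nat.card_coe_set_eq, Set.ncard_compl, Set.ncard_singleton, hn]; rfl
    rw [card_coloring_eq_card_coloring_induce_mul (degree_eq_one_iff_existsUnique_adj.1 hv),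
      ih hT' hcard, hcard, hn]
    simp only [Nat.add_sub_cancel]
    ring

theorem isTree_pathGraph (m : ℕ) : (pathGraph (m + 1)).IsTree := by
  refine isTree_iff_connected_and_card.2 ⟨pathGraph_connected m, ?_⟩
  let edge (i : Fin m) : (pathGraph (m + 1)).edgeSet :=
    ⟨s(i.castSucc, i.succ), by simp [pathGraph_adj]⟩
  have hedge : Function.Bijective edge := by
    refine ⟨fun i j hij => ?_, ?_⟩
    · simp only [edge, Subtype.mk.injEq, Sym2.eq_iff] at hij
      rcases hij with ⟨h, -⟩ | ⟨h, h'⟩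
      · exact Fin.castSucc_injective _ h
      · simp only [Fin.ext_iff, Fin.val_castSucc, Fin.val_succ] at h h'
        omega
    · rintro ⟨e, he⟩
      induction e using Sym2.ind with
      | _ a b =>
      rw [mem_edgeSet, pathGraph_adj] at he
      rcases he with h | h
      · refine ⟨⟨a, by omega⟩, Subtype.ext ?_⟩
        simp [edge, h]
      · refine ⟨⟨b, by omega⟩, Subtype.ext ?_⟩
        simp [edge, h, Sym2.eq_swap]
  rw [← Nat.card_congr (Equiv.ofBijective edge hedge)]
  simp

end SimpleGraph

lemma Finset.mem_finsuppAntidiag_iff_degree {σ : Type*} [DecidableEq σ] {s : Finset σ} {m : ℕ}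
    {d : σ →₀ ℕ} : d ∈ s.finsuppAntidiag m ↔ d.degree = m ∧ d.support ⊆ s := by
  rw [Finset.mem_finsuppAntidiag']
  rfl

namespace MvPowerSeries

variable {σ R : Type*} [CommSemiring R]

lemma isHomogeneous_iff_degree_eq {f : MvPowerSeries σ R} {p : ℕ} :
    f.IsHomogeneous p ↔ ∀ d, coeff d f ≠ 0 → d.degree = p :=
  ⟨fun hf _ hd => not_not.1 fun h => hd (hf.coeff_eq_zero h),
    fun h {d} hd => (congrArg (· d) Finsupp.degree_eq_weight_one).symm.trans (h d hd)⟩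

variable [DecidableEq σ]

/-- The degree-`m` part of a power series evaluated at `x_i = 1` for `i ∈ s`, `x_i = 0` for
`i ∉ s`. -/
def evalOnesOn (s : Finset σ) (m : ℕ) : MvPowerSeries σ R →ₗ[R] R :=
  ∑ d ∈ s.finsuppAntidiag m, coeff d

lemma evalOnesOn_apply (s : Finset σ) (m : ℕ) (f : MvPowerSeries σ R) :
    evalOnesOn s m f = ∑ d ∈ s.finsuppAntidiag m, coeff d f := by
  simp [evalOnesOn]

lemma evalOnesOn_one (s : Finset σ) : evalOnesOn s 0 (1 : MvPowerSeries σ R) = 1 := by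
  simp [evalOnesOn_apply]

lemma isHomogeneous_one : (1 : MvPowerSeries σ R).IsHomogeneous 0 :=
  isHomogeneous_iff_degree_eq.2 fun d hd => by
    rw [coeff_one] at hd
    simp [(show d = 0 ∧ _ by simpa using hd).1]

lemma evalOnesOn_mul {s : Finset σ} {f g : MvPowerSeries σ R} {p q : ℕ}
    (hf : f.IsHomogeneous p) (hg : g.IsHomogeneous q) :
    evalOnesOn s (p + q) (f * g) = evalOnesOn s p f * evalOnesOn s q g := by
  simp only [evalOnesOn_apply, coeff_mul]
  rw [Finset.sum_sigma', Finset.sum_mul_sum, ← Finset.sum_product']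
  symm
  refine Finset.sum_bij_ne_zero (fun x _ _ => ⟨x.1 + x.2, x⟩) (fun x hx _ => ?_)
    (fun x _ _ y _ _ hxy => by simpa using congrArg Sigma.snd hxy) (fun x hx hne => ?_)
    (fun _ _ _ => rfl)
  · simp only [Finset.mem_product, Finset.mem_finsuppAntidiag_iff_degree] at hx
    simp only [Finset.mem_sigma, Finset.mem_finsuppAntidiag_iff_degree, map_add, hx.1.1, hx.2.1,
      Finset.HasAntidiagonal.mem_antidiagonal, and_true, true_and]
    exact Finsupp.support_add.trans (Finset.union_subset hx.1.2 hx.2.2)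
  · obtain ⟨d, x, y⟩ := x
    simp only [Finset.mem_sigma, Finset.mem_finsuppAntidiag_iff_degree,
      Finset.HasAntidiagonal.mem_antidiagonal] at hx
    obtain ⟨⟨-, hds⟩, rfl⟩ := hx
    refine ⟨(x, y), ?_, ?_, rfl⟩
    · simp only [Finset.mem_product, Finset.mem_finsuppAntidiag_iff_degree]
      refine ⟨⟨?_, (Finsupp.support_mono le_self_add).trans hds⟩,
        ⟨?_, (Finsupp.support_mono le_add_self).trans hds⟩⟩
      · exact isHomogeneous_iff_degree_eq.1 hf x (left_ne_zero_of_mul hne)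
      · exact isHomogeneous_iff_degree_eq.1 hg y (right_ne_zero_of_mul hne)
    · exact hne

end MvPowerSeries

section Chromatic

open MvPowerSeries

variable {V : Type} [Fintype V]

/-- The exponent of the monomial `∏ v, x_(κ v)` of a colouring `κ`. -/
def colorExponent (κ : V → ℕ) : ℕ →₀ ℕ := Multiset.toFinsupp (Finset.univ.val.map κ)

lemma colorExponent_apply (κ : V → ℕ) (i : ℕ) :
    colorExponent κ i = (Finset.univ.filter fun v => κ v = i).card := by
  simp [colorExponent, Multiset.toFinsupp_apply, Multiset.count_map, Finset.card,
    Finset.filter_val, eq_comm]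

lemma degree_colorExponent (κ : V → ℕ) : (colorExponent κ).degree = Fintype.card V :=
  (Multiset.toFinsupp_sum_eq _).trans (by simp)

lemma support_colorExponent (κ : V → ℕ) : (colorExponent κ).support = Finset.univ.image κ := by
  simp [colorExponent, Multiset.toFinsupp_support, Finset.image]

lemma coeff_csf (G : SimpleGraph V) (d : ℕ →₀ ℕ) :
    coeff d (csf G) = Nat.card {κ : V → ℕ //
      (∀ u v, G.Adj u v → κ u ≠ κ v) ∧ colorExponent κ = d} := by
  change ((Nat.card _ : ℕ) : ℚ) = _
  congr 1
  exact Nat.card_congr <| Equiv.subtypeEquivRight fun κ => and_congr_right' <| by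
    simp [Finsupp.ext_iff, colorExponent_apply]

lemma csf_isHomogeneous (G : SimpleGraph V) : (csf G).IsHomogeneous (Fintype.card V) :=
  isHomogeneous_iff_degree_eq.2 fun d hd => by
    rw [coeff_csf, Nat.cast_ne_zero, Nat.card_ne_zero] at hd
    obtain ⟨⟨κ, -, rfl⟩⟩ := hd.1
    exact degree_colorExponent κ

lemma evalOnesOn_range_csf (G : SimpleGraph V) (k : ℕ) :
    evalOnesOn (Finset.range k) (Fintype.card V) (csf G) = Nat.card (G.Coloring (Fin k)) := by
  let D (C : G.Coloring (Fin k)) : ℕ →₀ ℕ := colorExponent fun v => (C v : ℕ)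
  have hD (C : G.Coloring (Fin k)) : D C ∈ (Finset.range k).finsuppAntidiag (Fintype.card V) := by
    rw [Finset.mem_finsuppAntidiag_iff_degree, degree_colorExponent, support_colorExponent]
    exact ⟨rfl, fun i hi => by obtain ⟨v, -, rfl⟩ := Finset.mem_image.1 hi; simp⟩
  have hfiber : ∀ d ∈ (Finset.range k).finsuppAntidiag (Fintype.card V),
      coeff d (csf G) = (Finset.univ.filter fun C => D C = d).card := by
    intro d hd
    rw [coeff_csf, ← Fintype.card_subtype, ← Nat.card_eq_fintype_card]
    have hlt (κ : V → ℕ) (hκ : colorExponent κ = d) (v : V) : κ v < k := by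
      have := (Finset.mem_finsuppAntidiag_iff_degree.1 hd).2
      rw [← hκ, support_colorExponent] at this
      simpa using this (Finset.mem_image_of_mem κ (Finset.mem_univ v))
    congr 1
    exact Nat.card_congr
      { toFun := fun κ => ⟨⟨fun v => ⟨κ.1 v, hlt κ.1 κ.2.2 v⟩,
          fun h hv => κ.2.1 _ _ h (congrArg Fin.val hv)⟩, κ.2.2⟩
        invFun := fun C => ⟨fun v => C.1 v, fun _ _ h hv => C.1.valid h (Fin.ext hv), C.2⟩
        left_inv := fun _ => rfl
        right_inv := fun _ => Subtype.ext (RelHom.ext fun _ => rfl) }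
  rw [evalOnesOn_apply, Finset.sum_congr rfl hfiber, ← Nat.cast_sum,
    ← Finset.card_eq_sum_card_fiberwise fun C _ => hD C, Finset.card_univ, Nat.card_eq_fintype_card]

lemma csf_pathGraph_isHomogeneous (m : ℕ) : (csf (SimpleGraph.pathGraph m)).IsHomogeneous m := by
  have h := @csf_isHomogeneous _ _ (SimpleGraph.pathGraph m)
  rwa [Fintype.card_fin] at h

lemma XP_zero : XP 0 = 1 := by
  simp [XP]

lemma XP_cons (m : ℕ) (μ : Multiset ℕ) : XP (m ::ₘ μ) = csf (SimpleGraph.pathGraph m) * XP μ := by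
  simp [XP]

lemma XP_isHomogeneous (μ : Multiset ℕ) : (XP μ).IsHomogeneous μ.sum := by
  induction μ using Multiset.induction with
  | empty => exact XP_zero ▸ isHomogeneous_one
  | cons m μ ih =>
    rw [XP_cons, Multiset.sum_cons]
    exact IsHomogeneous.mul (csf_pathGraph_isHomogeneous m) ih

lemma evalOnesOn_csf_of_isTree {T : SimpleGraph V} (hT : T.IsTree) {k : ℕ} (hk : k ≠ 0) :
    evalOnesOn (Finset.range (k + 1)) (Fintype.card V) (csf T)
      = (1 + (k : ℚ)⁻¹) * (k : ℚ) ^ Fintype.card V := by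
  obtain ⟨n, hn⟩ := Nat.exists_eq_add_one.2 (Fintype.card_pos_iff.2 hT.connected.nonempty)
  rw [evalOnesOn_range_csf, hT.card_coloring, Nat.card_eq_fintype_card (α := V), hn,
    Nat.card_eq_fintype_card, Fintype.card_fin]
  push_cast
  field_simp
  ring

lemma evalOnesOn_XP {k : ℕ} (hk : k ≠ 0) {μ : Multiset ℕ} (hμ : ∀ m ∈ μ, 0 < m) :
    evalOnesOn (Finset.range (k + 1)) μ.sum (XP μ)
      = (1 + (k : ℚ)⁻¹) ^ Multiset.card μ * (k : ℚ) ^ μ.sum := by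
  induction μ using Multiset.induction with
  | empty => simp [XP_zero, evalOnesOn_one]
  | cons m μ ih =>
    obtain ⟨m, rfl⟩ := Nat.exists_eq_add_one.2 (hμ m (Multiset.mem_cons_self m μ))
    have hpath := evalOnesOn_csf_of_isTree (SimpleGraph.isTree_pathGraph m) hk
    rw [Fintype.card_fin] at hpath
    rw [XP_cons, Multiset.sum_cons,
      evalOnesOn_mul (csf_pathGraph_isHomogeneous _) (XP_isHomogeneous μ), hpath,
      ih fun m' hm' => hμ m' (Multiset.mem_cons_of_mem hm'), Multiset.card_cons]
    ring

end Chromatic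

lemma eval_basisPoly (n : ℕ) (a : n.Partition → ℚ) (t : ℚ) :
    (basisPoly n a).eval t = ∑ l : n.Partition, a l * t ^ l.parts.card := by
  simp [basisPoly, eval_finsetSum]

/-- for any tree `T`, the tree polynomial is `τ_T(x) = x`; that is, if
`X_T = Σ_{λ ⊢ n} a_λ X_{P_λ}` then `Σ_λ a_λ x^{ℓ(λ)} = x`. -/
theorem stmt_8 {V : Type} [Fintype V] (T : SimpleGraph V) (hT : T.IsTree)
    (n : ℕ) (hn : Fintype.card V = n) (a : n.Partition → ℚ)
    (ha : csf T = ∑ l : n.Partition, a l • XP l.parts) :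
    basisPoly n a = Polynomial.X := by
  have key (k : ℕ) (hk : k ≠ 0) : (basisPoly n a).eval (1 + (k : ℚ)⁻¹) = 1 + (k : ℚ)⁻¹ := by
    have h := congrArg (MvPowerSeries.evalOnesOn (Finset.range (k + 1)) n) ha
    have htree := evalOnesOn_csf_of_isTree hT hk
    have hpaths (l : n.Partition) := l.parts_sum ▸ evalOnesOn_XP hk fun m hm => l.parts_pos hm
    rw [hn] at htree
    simp only [htree, map_sum, map_smul, smul_eq_mul, hpaths, ← mul_assoc, ← Finset.sum_mul] at h
    rw [eval_basisPoly]
    exact (mul_left_injective₀ (pow_ne_zero n (Nat.cast_ne_zero.2 hk))) h.symm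
  refine Polynomial.eq_of_infinite_eval_eq _ _ <| Set.infinite_of_injective_forall_mem
    (f := fun j : ℕ => 1 + ((j + 1 : ℕ) : ℚ)⁻¹) (fun i j hij => by simpa using hij) fun j => ?_
  simpa using key (j + 1) j.succ_ne_zero
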